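/- arXiv:1903.05951 — 2 statements merged into one kernel-verified Lean document; each statement's English description precedes it below -/
import Mathlib

section
/- In F₂⁴, the set D = {0, e₁, e₂, e₃, e₄, e₁+e₃, e₁+e₄, e₁+e₃+e₄} is not equal to B_d(0,r) for any TS-metric d on F₂⁴ and any r > 0. -/
open Set Function

/-- A weight on a binary vector space `ι → ZMod 2`. -/
def IsWeight {ι : Type*} (ω : (ι → ZMod 2) → ℝ) : Prop :=
  (∀ x, 0 ≤ ω x) ∧ (∀ x, ω x = 0 ↔ x = 0) ∧ ∀ x y, ω (x + y) ≤ ω x + ω y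

/-- A function respects the support of vectors. -/
def RespectsSupport {ι : Type*} (ω : (ι → ZMod 2) → ℝ) : Prop :=
  ∀ x y : ι → ZMod 2, Function.support x ⊆ Function.support y → ω x ≤ ω y

/-- A TS-metric: a (translation-invariant) metric determined by a weight
that respects support, i.e. `d x y = ω (x + y)` (note `-y = y` in char 2). -/
def IsTSMetric {ι : Type*} (d : (ι → ZMod 2) → (ι → ZMod 2) → ℝ) : Prop :=
  ∃ ω, IsWeight ω ∧ RespectsSupport ω ∧ ∀ x y, d x y = ω (x + y)

/-- The ball `B_d(x, r)`. -/
def tsBall {ι : Type*} (d : (ι → ZMod 2) → (ι → ZMod 2) → ℝ) (x : ι → ZMod 2) (r : ℝ) :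
    Set (ι → ZMod 2) := {y | d x y ≤ r}

/-- `(D, C)` is a tiling: the translates `c + D`, `c ∈ C`, are pairwise disjoint
and cover the whole space. -/
def IsTiling {ι : Type*} (D C : Set (ι → ZMod 2)) : Prop :=
  (⋃ c ∈ C, (c + ·) '' D) = Set.univ ∧
  C.Pairwise fun c c' => Disjoint ((c + ·) '' D) ((c' + ·) '' D)

/-- `C` is a `(d, r)`-perfect code: the balls of radius `r` centered at codewords
are pairwise disjoint and cover the whole space. -/
def IsPerfectCode {ι : Type*} (d : (ι → ZMod 2) → (ι → ZMod 2) → ℝ) (r : ℝ)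
    (C : Set (ι → ZMod 2)) : Prop :=
  (⋃ c ∈ C, tsBall d c r) = Set.univ ∧
  C.Pairwise fun c c' => Disjoint (tsBall d c r) (tsBall d c' r)

/-- A polyhedromino: any two points of `D` are joined by a geodesic path
(w.r.t. the Hamming distance) lying inside `D`. -/
def IsPolyhedromino {ι : Type*} [Fintype ι] (D : Set (ι → ZMod 2)) : Prop :=
  ∀ x ∈ D, ∀ y ∈ D, ∃ γ : ℕ → (ι → ZMod 2),
    γ 0 = x ∧ γ (hammingDist x y) = y ∧
    (∀ i ≤ hammingDist x y, γ i ∈ D) ∧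
    ∀ i < hammingDist x y, hammingDist (γ i) (γ (i + 1)) = 1

/-- A poly-tiling: a tiling whose tile is a polyhedromino. -/
def IsPolyTiling {ι : Type*} [Fintype ι] (D C : Set (ι → ZMod 2)) : Prop :=
  IsTiling D C ∧ IsPolyhedromino D

/-- The vector `e_i` with support `{i}`. -/
def unitVec {ι : Type*} [DecidableEq ι] (i : ι) : ι → ZMod 2 := Pi.single i 1

/-- The `F`-combinatorial weight: the minimal number of members of `F` needed
to cover the support of `x`. -/
noncomputable def combWeight {ι : Type*} [DecidableEq ι] (F : Finset (Finset ι))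
    (x : ι → ZMod 2) : ℕ :=
  sInf {k | ∃ A : Finset (Finset ι), A ⊆ F ∧ A.card = k ∧ Function.support x ⊆ ↑(A.sup id)}

/-- The axioms of a metric. -/
def IsMetric {α : Type*} (d : α → α → ℝ) : Prop :=
  (∀ x y, d x y = 0 ↔ x = y) ∧ (∀ x y, d x y = d y x) ∧ ∀ x y z, d x z ≤ d x y + d y z

/-- The max-metric on the product (concatenation) space, identified with
functions on `Fin n ⊕ Fin m`. -/
def dmax {n m : ℕ} (d₁ : (Fin n → ZMod 2) → (Fin n → ZMod 2) → ℝ)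
    (d₂ : (Fin m → ZMod 2) → (Fin m → ZMod 2) → ℝ)
    (w w' : Fin n ⊕ Fin m → ZMod 2) : ℝ :=
  max (d₁ (fun i => w (Sum.inl i)) (fun i => w' (Sum.inl i)))
      (d₂ (fun j => w (Sum.inr j)) (fun j => w' (Sum.inr j)))

theorem IsTSMetric.mem_tsBall_zero_of_support_subset {ι : Type*}
    {d : (ι → ZMod 2) → (ι → ZMod 2) → ℝ} (hd : IsTSMetric d) {r : ℝ} {x y : ι → ZMod 2}
    (hy : y ∈ tsBall d 0 r) (hxy : support x ⊆ support y) : x ∈ tsBall d 0 r := by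
  obtain ⟨ω, -, hω, hdω⟩ := hd
  simp only [tsBall, mem_ofPred_eq, hdω, zero_add] at hy ⊢
  exact (hω x y hxy).trans hy

theorem stmt_6_general (d : (Fin 4 → ZMod 2) → (Fin 4 → ZMod 2) → ℝ) (r : ℝ)
    (hd : IsTSMetric d) :
    tsBall d 0 r ≠
      ({0, unitVec 0, unitVec 1, unitVec 2, unitVec 3,
        unitVec 0 + unitVec 2, unitVec 0 + unitVec 3,
        unitVec 0 + unitVec 2 + unitVec 3} : Set (Fin 4 → ZMod 2)) := by
  intro hball
  -- `D` contains `e₁ + e₃ + e₄` but not `e₃ + e₄`, whose support is smaller.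
  have hsupport : support (unitVec 2 + unitVec 3 : Fin 4 → ZMod 2) ⊆
      support (unitVec 0 + unitVec 2 + unitVec 3) := by
    intro i
    fin_cases i <;> simp [unitVec]
  have hmem := hd.mem_tsBall_zero_of_support_subset (by rw [hball]; simp) hsupport
  rw [hball] at hmem
  revert hmem
  simp only [mem_insert_iff, mem_singleton_iff, unitVec]
  decide

/-- in `F₂⁴`, the tile `{0, e₁, e₂, e₃, e₄, e₁+e₃, e₁+e₄, e₁+e₃+e₄}`
(indices shifted to `0,…,3`) is not a TS-ball centered at `0`. -/
theorem stmt_6 (d : (Fin 4 → ZMod 2) → (Fin 4 → ZMod 2) → ℝ) (r : ℝ)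
    (hd : IsTSMetric d) (hr : 0 < r) :
    tsBall d 0 r ≠
      ({0, unitVec 0, unitVec 1, unitVec 2, unitVec 3,
        unitVec 0 + unitVec 2, unitVec 0 + unitVec 3,
        unitVec 0 + unitVec 2 + unitVec 3} : Set (Fin 4 → ZMod 2)) :=
  stmt_6_general d r hd
end

section
/- Let (D₁, C₁) be a poly-tiling of F₂ⁿ and (D₂, C₂) a poly-tiling of F₂ᵐ, with D₁ = B_{d₁}(0,r) and D₂ = B_{d₂}(0,r) for TS-metrics d₁ on F₂ⁿ and d₂ on F₂ᵐ and a common radius r > 0. Define d_max((x₁,x₂),(y₁,y₂)) = max(d₁(x₁,y₁), d₂(x₂,y₂)) on F₂ⁿ × F₂ᵐ ≅ F₂^{n+m}. Then (D₁ × D₂, C₁ × C₂) is a poly-tiling of F₂^{n+m}, D₁ × D₂ = B_{d_max}(0,r), and consequently C₁ × C₂ is a (d_max, r)-perfect code. -/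
open Set Function

section Helpers

lemma elim_add {n m : ℕ} (u u' : Fin n → ZMod 2) (v v' : Fin m → ZMod 2) :
    Sum.elim u v + Sum.elim u' v' = Sum.elim (u + u') (v + v') := by
  funext i; cases i <;> rfl

lemma elim_decomp {n m : ℕ} (w : Fin n ⊕ Fin m → ZMod 2) :
    Sum.elim (fun i => w (Sum.inl i)) (fun j => w (Sum.inr j)) = w := by
  funext i; cases i <;> rfl

lemma add_self_f {ι : Type*} (x : ι → ZMod 2) : x + x = 0 := by
  funext i; exact CharTwo.add_self_eq_zero _

lemma hammingDist_sum_elim {n m : ℕ} (u u' : Fin n → ZMod 2) (v v' : Fin m → ZMod 2) :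
    hammingDist (Sum.elim u v) (Sum.elim u' v') = hammingDist u u' + hammingDist v v' := by
  classical
  simp only [hammingDist]
  rw [← Finset.card_toLeft_add_card_toRight]
  have h1 : (Finset.filter (fun i => Sum.elim u v i ≠ Sum.elim u' v' i) Finset.univ).toLeft
      = Finset.filter (fun i => u i ≠ u' i) Finset.univ := by ext x; simp
  have h2 : (Finset.filter (fun i => Sum.elim u v i ≠ Sum.elim u' v' i) Finset.univ).toRight
      = Finset.filter (fun i => v i ≠ v' i) Finset.univ := by ext x; simp
  rw [h1, h2]

lemma poly_concat {n m : ℕ} {D₁ : Set (Fin n → ZMod 2)} {D₂ : Set (Fin m → ZMod 2)}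
    (h1 : IsPolyhedromino D₁) (h2 : IsPolyhedromino D₂) :
    IsPolyhedromino (Set.image2 (fun (u : Fin n → ZMod 2) (v : Fin m → ZMod 2) =>
      Sum.elim u v) D₁ D₂) := by
  rintro x ⟨u, hu, v, hv, rfl⟩ y ⟨u', hu', v', hv', rfl⟩
  obtain ⟨γ₁, hγ10, hγ1e, hγ1mem, hγ1step⟩ := h1 u hu u' hu'
  obtain ⟨γ₂, hγ20, hγ2e, hγ2mem, hγ2step⟩ := h2 v hv v' hv'
  set k₁ := hammingDist u u' with hk₁
  set k₂ := hammingDist v v' with hk₂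
  refine ⟨fun i => if i < k₁ then Sum.elim (γ₁ i) v else Sum.elim u' (γ₂ (i - k₁)), ?_, ?_, ?_, ?_⟩
  · by_cases h0 : 0 < k₁
    · simp only [if_pos h0, hγ10]
    · have huu : u = u' := hammingDist_eq_zero.mp (by omega)
      have hz : 0 - k₁ = 0 := by omega
      simp only [if_neg h0, hz, hγ20, huu]
  · rw [hammingDist_sum_elim, ← hk₁, ← hk₂]
    have : ¬ (k₁ + k₂ < k₁) := by omega
    simp only [if_neg this, Nat.add_sub_cancel_left, hγ2e]
  · rw [hammingDist_sum_elim]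
    intro i hi
    by_cases h : i < k₁
    · simp only [if_pos h]
      exact Set.mem_image2_of_mem (hγ1mem i (le_of_lt h)) hv
    · simp only [if_neg h]
      exact Set.mem_image2_of_mem (hγ1e ▸ hγ1mem k₁ le_rfl)
        (hγ2mem (i - k₁) (by omega))
  · rw [hammingDist_sum_elim]
    intro i hi
    by_cases h : i < k₁
    · by_cases h' : i + 1 < k₁
      · simp only [if_pos h, if_pos h']
        rw [hammingDist_sum_elim, hammingDist_self, Nat.add_zero]
        exact hγ1step i h
      · have hik : i + 1 = k₁ := by omega
        simp only [if_pos h, if_neg h']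
        have : γ₂ (i + 1 - k₁) = v := by rw [hik, Nat.sub_self, hγ20]
        rw [this]
        have hg : (Sum.elim u' v : Fin n ⊕ Fin m → ZMod 2)
            = Sum.elim (γ₁ (i + 1)) v := by rw [hik, hγ1e]
        rw [hg, hammingDist_sum_elim, hammingDist_self, Nat.add_zero]
        exact hγ1step i h
    · have h' : ¬ (i + 1 < k₁) := by omega
      simp only [if_neg h, if_neg h']
      rw [hammingDist_sum_elim, hammingDist_self, Nat.zero_add]
      have : i + 1 - k₁ = (i - k₁) + 1 := by omega
      rw [this]
      exact hγ2step (i - k₁) (by omega)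

end Helpers

/-- if `(D₁, C₁)` and `(D₂, C₂)` are poly-tilings whose tiles are TS-balls
of the same radius `r > 0`, then `(D₁ × D₂, C₁ × C₂)` is a poly-tiling of `F₂^{n+m}`,
`D₁ × D₂ = B_{d_max}(0, r)`, and `C₁ × C₂` is a `(d_max, r)`-perfect code. -/
theorem stmt_18 {n m : ℕ} (D₁ C₁ : Set (Fin n → ZMod 2)) (D₂ C₂ : Set (Fin m → ZMod 2))
    (d₁ : (Fin n → ZMod 2) → (Fin n → ZMod 2) → ℝ)
    (d₂ : (Fin m → ZMod 2) → (Fin m → ZMod 2) → ℝ) (r : ℝ) (hr : 0 < r)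
    (h₁ : IsPolyTiling D₁ C₁) (h₂ : IsPolyTiling D₂ C₂)
    (hd₁ : IsTSMetric d₁) (hd₂ : IsTSMetric d₂)
    (hD₁ : D₁ = tsBall d₁ 0 r) (hD₂ : D₂ = tsBall d₂ 0 r) :
    IsPolyTiling
        (Set.image2 (fun (u : Fin n → ZMod 2) (v : Fin m → ZMod 2) => Sum.elim u v) D₁ D₂)
        (Set.image2 (fun (u : Fin n → ZMod 2) (v : Fin m → ZMod 2) => Sum.elim u v) C₁ C₂) ∧
    Set.image2 (fun (u : Fin n → ZMod 2) (v : Fin m → ZMod 2) => Sum.elim u v) D₁ D₂ =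
      tsBall (dmax d₁ d₂) 0 r ∧
    IsPerfectCode (dmax d₁ d₂) r
      (Set.image2 (fun (u : Fin n → ZMod 2) (v : Fin m → ZMod 2) => Sum.elim u v) C₁ C₂) := by
  
  classical
  obtain ⟨⟨hcov₁, hdisj₁⟩, hpoly₁⟩ := h₁
  obtain ⟨⟨hcov₂, hdisj₂⟩, hpoly₂⟩ := h₂
  obtain ⟨ω₁, hw₁, hs₁, he₁⟩ := hd₁
  obtain ⟨ω₂, hw₂, hs₂, he₂⟩ := hd₂
  -- translation invariance of dmax
  have htrans : ∀ c w : Fin n ⊕ Fin m → ZMod 2, dmax d₁ d₂ c w = dmax d₁ d₂ 0 (c + w) := by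
    intro c w
    simp only [dmax, he₁, he₂]
    have e1 : ((fun i => c (Sum.inl i)) + fun i => w (Sum.inl i))
        = ((fun i => (0 : Fin n ⊕ Fin m → ZMod 2) (Sum.inl i))
          + fun i => (c + w) (Sum.inl i)) := by funext i; simp
    have e2 : ((fun j => c (Sum.inr j)) + fun j => w (Sum.inr j))
        = ((fun j => (0 : Fin n ⊕ Fin m → ZMod 2) (Sum.inr j))
          + fun j => (c + w) (Sum.inr j)) := by funext j; simp
    rw [e1, e2]
  -- the tiling cover
  have hcov : (⋃ c ∈ (Set.image2 (fun (u : Fin n → ZMod 2) (v : Fin m → ZMod 2) =>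
      Sum.elim u v) C₁ C₂), (c + ·) ''
      (Set.image2 (fun (u : Fin n → ZMod 2) (v : Fin m → ZMod 2) => Sum.elim u v) D₁ D₂))
      = Set.univ := by
    refine Set.eq_univ_of_forall fun w => ?_
    have h1 : (fun i => w (Sum.inl i)) ∈ ⋃ c ∈ C₁, (c + ·) '' D₁ := by
      rw [hcov₁]; exact Set.mem_univ _
    have h2 : (fun j => w (Sum.inr j)) ∈ ⋃ c ∈ C₂, (c + ·) '' D₂ := by
      rw [hcov₂]; exact Set.mem_univ _
    simp only [Set.mem_iUnion, Set.mem_image, exists_prop] at h1 h2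
    obtain ⟨c₁, hc₁, x, hx, hx'⟩ := h1
    obtain ⟨c₂, hc₂, y, hy, hy'⟩ := h2
    refine Set.mem_biUnion (Set.mem_image2_of_mem hc₁ hc₂) ?_
    exact ⟨Sum.elim x y, Set.mem_image2_of_mem hx hy, by
      show Sum.elim c₁ c₂ + Sum.elim x y = w
      rw [elim_add, hx', hy', elim_decomp]⟩
  -- the tiling disjointness
  have hdisj : (Set.image2 (fun (u : Fin n → ZMod 2) (v : Fin m → ZMod 2) =>
      Sum.elim u v) C₁ C₂).Pairwise fun c c' => Disjoint
        ((c + ·) '' (Set.image2 (fun (u : Fin n → ZMod 2) (v : Fin m → ZMod 2) =>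
          Sum.elim u v) D₁ D₂))
        ((c' + ·) '' (Set.image2 (fun (u : Fin n → ZMod 2) (v : Fin m → ZMod 2) =>
          Sum.elim u v) D₁ D₂)) := by
    rintro a ⟨c₁, hc₁, c₂, hc₂, rfl⟩ b ⟨c₁', hc₁', c₂', hc₂', rfl⟩ hne
    rw [Set.disjoint_left]
    rintro w ⟨p, ⟨x, hx, y, hy, rfl⟩, rfl⟩ ⟨q, ⟨x', hx', y', hy', rfl⟩, hq⟩
    have hq' : Sum.elim (c₁' + x') (c₂' + y') = Sum.elim (c₁ + x) (c₂ + y) := by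
      rw [← elim_add, ← elim_add]; exact hq
    have h1 : c₁' + x' = c₁ + x := funext fun i => congrFun hq' (Sum.inl i)
    have h2 : c₂' + y' = c₂ + y := funext fun j => congrFun hq' (Sum.inr j)
    by_cases hcc : c₁ = c₁'
    · have hcc2 : c₂ ≠ c₂' := by
        intro h; apply hne; rw [hcc, h]
      exact Set.disjoint_left.mp (hdisj₂ hc₂ hc₂' hcc2) ⟨y, hy, rfl⟩ ⟨y', hy', h2⟩
    · exact Set.disjoint_left.mp (hdisj₁ hc₁ hc₁' hcc) ⟨x, hx, rfl⟩ ⟨x', hx', h1⟩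
  -- D₁ × D₂ = ball
  have hB : Set.image2 (fun (u : Fin n → ZMod 2) (v : Fin m → ZMod 2) =>
      Sum.elim u v) D₁ D₂ = tsBall (dmax d₁ d₂) 0 r := by
    ext w
    constructor
    · rintro ⟨x, hx, y, hy, rfl⟩
      rw [hD₁] at hx; rw [hD₂] at hy
      show max (d₁ (fun i => (0 : Fin n ⊕ Fin m → ZMod 2) (Sum.inl i))
        (fun i => Sum.elim x y (Sum.inl i)))
        (d₂ (fun j => (0 : Fin n ⊕ Fin m → ZMod 2) (Sum.inr j))
        (fun j => Sum.elim x y (Sum.inr j))) ≤ r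
      exact max_le hx hy
    · intro hw
      have hmax : max (d₁ 0 (fun i => w (Sum.inl i))) (d₂ 0 (fun j => w (Sum.inr j))) ≤ r := hw
      refine ⟨fun i => w (Sum.inl i), ?_, fun j => w (Sum.inr j), ?_, elim_decomp w⟩
      · rw [hD₁]; exact le_trans (le_max_left _ _) hmax
      · rw [hD₂]; exact le_trans (le_max_right _ _) hmax
  -- translated balls
  have hballc : ∀ c : Fin n ⊕ Fin m → ZMod 2,
      tsBall (dmax d₁ d₂) c r = (c + ·) '' (Set.image2
        (fun (u : Fin n → ZMod 2) (v : Fin m → ZMod 2) => Sum.elim u v) D₁ D₂) := by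
    intro c
    rw [hB]
    ext w
    simp only [tsBall, Set.mem_setOf_eq, Set.mem_image]
    constructor
    · intro h
      exact ⟨c + w, by rw [← htrans]; exact h, by rw [← add_assoc, add_self_f, zero_add]⟩
    · rintro ⟨z, hz, rfl⟩
      rw [htrans, ← add_assoc, add_self_f, zero_add]
      exact hz
  refine ⟨⟨⟨hcov, hdisj⟩, poly_concat hpoly₁ hpoly₂⟩, hB, ?_, ?_⟩
  · simp only [hballc]
    exact hcov
  · intro a ha b hb hne
    rw [hballc, hballc]
    exact hdisj ha hb hne
end
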